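/- arXiv:1401.2387 — 2 statements merged into one kernel-verified Lean document; each statement's English description precedes it below -/
import Mathlib

section
/- Let q(z) = z₀² + z₁² + z₂² + z₃² on ℂ⁴ and let Q_E = {[z] ∈ ℙ³(ℂ) : q(z) = 0} be the empty quadric surface. Let p₁, p₂, p₃, p₄ ∈ Q_E be four distinct points, and let ℓ₁, ℓ₂, ℓ₃, ℓ₄ ⊆ ℂ⁴ be 2-dimensional complex subspaces with ℓᵢ ∩ ℓⱼ = {0} for i ≠ j, on each of which q vanishes identically, such that no pₖ lies in any ℙ(ℓⱼ). Then there do not exist homogeneous polynomials f₀,…,f₃ ∈ ℝ[s,t] of degree 3, not all zero, such that the image of the associated map contains p₁, p₂, p₃, p₄ and meets each of ℙ(ℓ₁), …, ℙ(ℓ₄). -/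
/-!
Let `F : ℂ² → ℂ⁴` be the complexified parametrization and `G = F₀² + ⋯ + F₃²`, a binary sextic.
On real parameters `G` is a sum of squares of real numbers, so `G ≠ 0` because the `fᵢ` are not
all zero. Each of the eight constraints is met at a parameter where `G` vanishes. Proportional
parameters have proportional images and the constraints are pairwise disjoint, so these are eight
distinct zeros of `G` on `ℙ¹`, whereas a nonzero binary form of degree 6 has at most 6 of them.
-/

open MvPolynomial

/-- The image in `ℙ³(ℂ)` of the map associated to real binary forms `f₀,…,f₃`. -/
def imageSet (f : Fin 4 → MvPolynomial (Fin 2) ℝ) :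
    Set (Projectivization ℂ (Fin 4 → ℂ)) :=
  {x | ∃ (a b : ℂ) (h : (fun i => eval ![a, b] (map (algebraMap ℝ ℂ) (f i))) ≠ 0),
    x = Projectivization.mk ℂ _ h}

theorem MvPolynomial.IsHomogeneous.eval_smul {σ R : Type*} [CommSemiring R]
    {φ : MvPolynomial σ R} {n : ℕ} (hφ : φ.IsHomogeneous n) (c : R) (x : σ → R) :
    eval (c • x) φ = c ^ n * eval x φ := by
  conv_lhs => rw [φ.as_sum]
  conv_rhs => rw [φ.as_sum]
  simp only [map_sum, Finset.mul_sum, eval_monomial]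
  refine Finset.sum_congr rfl fun d hd => ?_
  have hdeg : d.degree = n := by
    rw [Finsupp.degree_eq_weight_one]
    exact hφ (mem_support_iff.mp hd)
  simp only [Pi.smul_apply, smul_eq_mul, mul_pow, Finsupp.prod, Finset.prod_mul_distrib,
    Finset.prod_pow_eq_pow_sum, ← Finsupp.degree_apply, hdeg]
  ring

theorem MvPolynomial.IsHomogeneous.natDegree_aeval_X_one_le {R : Type*} [CommSemiring R]
    {G : MvPolynomial (Fin 2) R} {n : ℕ} (hG : G.IsHomogeneous n) :
    (MvPolynomial.aeval (![Polynomial.X, 1] : Fin 2 → Polynomial R) G).natDegree ≤ n := by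
  rw [G.as_sum, map_sum]
  refine Polynomial.natDegree_sum_le_of_forall_le _ _ fun d hd => ?_
  have hdeg : d 0 + d 1 = n := by
    rw [← hG (mem_support_iff.mp hd), Finsupp.weight_apply, Finsupp.sum_fintype _ _ (by simp)]
    simp
  rw [aeval_monomial, Finsupp.prod_fintype _ _ (by simp), Fin.prod_univ_two]
  simp only [Matrix.cons_val_zero, Matrix.cons_val_one, one_pow, mul_one,
    ← Polynomial.C_eq_algebraMap]
  exact (Polynomial.natDegree_C_mul_X_pow_le _ _).trans (by omega)

theorem Polynomial.eval_homogenize_of_snd_eq_zero {R : Type*} [CommSemiring R]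
    (p : Polynomial R) (n : ℕ) {x : Fin 2 → R} (hx : x 1 = 0) :
    MvPolynomial.eval x (p.homogenize n) = p.coeff n * x 0 ^ n := by
  rw [Polynomial.homogenize, map_sum, Finset.sum_eq_single (n, 0)]
  · simp [MvPolynomial.eval_monomial, Finsupp.prod_fintype]
  · rintro ⟨k, l⟩ hkl hne
    have hl : l ≠ 0 := by rintro rfl; simp_all
    simp [MvPolynomial.eval_monomial, Finsupp.prod_fintype, hx, hl]
  · simp

section Projective

open Projectivization

variable {K V : Type*} [Field K] [AddCommGroup V] [Module K V]

theorem Projectivization.mk_eq_mk_of_mul_eq_mul {x y : Fin 2 → K}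
    (hx : x ≠ 0) (hy : y ≠ 0) (h : x 0 * y 1 = y 0 * x 1) : mk K x hx = mk K y hy := by
  rw [mk_eq_mk_iff']
  by_cases hy1 : y 1 = 0
  · have hy0 : y 0 ≠ 0 := fun hy0 => hy (funext <| Fin.forall_fin_two.2 ⟨hy0, hy1⟩)
    have hx1 : x 1 = 0 := by simpa [hy1, hy0] using h
    exact ⟨x 0 / y 0, funext <| Fin.forall_fin_two.2 ⟨by simp [hy0], by simp [hy1, hx1]⟩⟩
  · refine ⟨x 1 / y 1, funext <| Fin.forall_fin_two.2 ⟨?_, by simp [hy1]⟩⟩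
    simp only [Pi.smul_apply, smul_eq_mul]
    field_simp
    linear_combination -h

theorem Projectivization.rep_mk_mem_iff {v : V} (hv : v ≠ 0) {W : Submodule K V} :
    (mk K v hv).rep ∈ W ↔ v ∈ W := by
  obtain ⟨u, hu⟩ := exists_smul_eq_mk_rep K v hv
  rw [← hu, Submodule.smul_mem_iff']

theorem Projectivization.sum_sq_rep_mk_eq_zero_iff {σ : Type*} [Fintype σ] {v : σ → K}
    (hv : v ≠ 0) : ∑ i, (mk K v hv).rep i ^ 2 = 0 ↔ ∑ i, v i ^ 2 = 0 := by
  obtain ⟨u, hu⟩ := exists_smul_eq_mk_rep K v hv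
  simp [← hu, Units.smul_def, mul_pow, ← Finset.mul_sum]

end Projective

open Function Projectivization in
theorem Polynomial.card_le_of_eval_homogenize_eq_zero {K ι : Type*} [Field K] [Fintype ι]
    {p : Polynomial K} {n : ℕ} (hp0 : p ≠ 0) (hpn : p.natDegree ≤ n) {x : ι → Fin 2 → K}
    (hx : ∀ i, x i ≠ 0) (hinj : Injective fun i => mk K (x i) (hx i))
    (hzero : ∀ i, MvPolynomial.eval (x i) (p.homogenize n) = 0) : Fintype.card ι ≤ n := by
  classical
  set Z := Finset.univ.filter fun i => x i 1 ≠ 0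
  have hZ : Z.card ≤ p.natDegree := by
    have hinjOn : Set.InjOn (fun i => x i 0 / x i 1) Z := fun i hi j hj h => by
      simp only [Finset.mem_coe, Finset.mem_filter, Finset.mem_univ, true_and, Z] at hi hj
      exact hinj (mk_eq_mk_of_mul_eq_mul _ _ (by rwa [div_eq_div_iff hi hj] at h))
    rw [← Finset.card_image_of_injOn hinjOn]
    refine card_le_degree_of_subset_roots fun z hz => ?_
    obtain ⟨i, hi, rfl⟩ := Finset.mem_image.mp hz
    simp only [Finset.mem_filter, Finset.mem_univ, true_and, Z] at hi
    have := hzero i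
    rw [eval_homogenize hpn _ hi] at this
    simpa [mem_roots hp0, hi] using this
  have hZc : Zᶜ.card ≤ 1 := Finset.card_le_one.mpr fun i hi j hj => by
    simp only [Finset.mem_compl, Finset.mem_filter, Finset.mem_univ, true_and, not_not, Z] at hi hj
    exact hinj (mk_eq_mk_of_mul_eq_mul _ _ (by simp [hi, hj]))
  have hcard : Fintype.card ι = Z.card + Zᶜ.card := (Finset.card_add_card_compl Z).symm
  rcases Zᶜ.eq_empty_or_nonempty with hempty | ⟨i, hi⟩
  · rw [hcard, hempty, Finset.card_empty]
    omega
  · simp only [Finset.mem_compl, Finset.mem_filter, Finset.mem_univ, true_and, not_not, Z] at hi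
    have hi0 : x i 0 ≠ 0 := fun h0 => hx i (_root_.funext <| Fin.forall_fin_two.2 ⟨h0, hi⟩)
    -- The zero at infinity `[1 : 0]` lowers the degree of `p`, so the bound is `n`, not `n + 1`.
    have hcoeff : p.coeff n = 0 := by
      have := hzero i
      rw [eval_homogenize_of_snd_eq_zero _ _ hi] at this
      simpa [hi0] using this
    have hlt : p.natDegree < n := lt_of_le_of_ne hpn fun h => hp0 <| by
      rwa [← leadingCoeff_eq_zero, leadingCoeff, h]
    omega

open Function Projectivization in
theorem MvPolynomial.IsHomogeneous.card_le_of_eval_eq_zero {K ι : Type*} [Field K] [Fintype ι]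
    {G : MvPolynomial (Fin 2) K} {n : ℕ} (hG : G.IsHomogeneous n) (hG0 : G ≠ 0)
    {x : ι → Fin 2 → K} (hx : ∀ i, x i ≠ 0) (hinj : Injective fun i => mk K (x i) (hx i))
    (hzero : ∀ i, eval (x i) G = 0) : Fintype.card ι ≤ n := by
  set p := MvPolynomial.aeval (![Polynomial.X, 1] : Fin 2 → Polynomial K) G
  have hGp : p.homogenize n = G := Polynomial.homogenize_eq_of_isHomogeneous hG rfl
  have hp0 : p ≠ 0 := fun hp => hG0 (by rw [← hGp, hp, Polynomial.homogenize_zero])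
  refine Polynomial.card_le_of_eval_homogenize_eq_zero hp0 hG.natDegree_aeval_X_one_le hx hinj
    fun i => ?_
  rw [hGp]
  exact hzero i

section RealForms

variable {σ : Type*} {f : σ → MvPolynomial (Fin 2) ℝ}

noncomputable def curveMap (f : σ → MvPolynomial (Fin 2) ℝ) (x : Fin 2 → ℂ) : σ → ℂ :=
  fun i => eval x (map (algebraMap ℝ ℂ) (f i))

theorem curveMap_smul {d : ℕ} (hf : ∀ i, (f i).IsHomogeneous d) (c : ℂ) (x : Fin 2 → ℂ) :
    curveMap f (c • x) = c ^ d • curveMap f x := by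
  funext i
  simp only [curveMap, Pi.smul_apply, smul_eq_mul]
  exact ((hf i).map (algebraMap ℝ ℂ)).eval_smul c x

theorem curveMap_ofReal (f : σ → MvPolynomial (Fin 2) ℝ) (t : Fin 2 → ℝ) :
    curveMap f (fun j => (t j : ℂ)) = fun i => (eval t (f i) : ℂ) := by
  funext i
  rw [curveMap, eval_map, ← eval₂_id, ← Complex.ofRealHom_eq_coe, eval₂_comp_left]
  rfl

open Projectivization in
theorem mk_curveMap_eq_of_mk_eq {d : ℕ} (hf : ∀ i, (f i).IsHomogeneous d) {x y : Fin 2 → ℂ}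
    (hx : x ≠ 0) (hy : y ≠ 0) (hfx : curveMap f x ≠ 0) (hfy : curveMap f y ≠ 0)
    (h : mk ℂ x hx = mk ℂ y hy) : mk ℂ (curveMap f x) hfx = mk ℂ (curveMap f y) hfy := by
  obtain ⟨a, rfl⟩ := (mk_eq_mk_iff' ℂ _ _ hx hy).mp h
  exact (mk_eq_mk_iff' ℂ _ _ hfx hfy).mpr ⟨a ^ d, (curveMap_smul hf a y).symm⟩

variable [Fintype σ]

theorem eq_zero_of_sum_sq_ofReal_eq_zero {r : σ → ℝ} (h : ∑ i, (r i : ℂ) ^ 2 = 0) : r = 0 := by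
  have hr : ∑ i, r i ^ 2 = 0 := by exact_mod_cast h
  funext i
  exact pow_eq_zero_iff two_ne_zero |>.mp <|
    (Finset.sum_eq_zero_iff_of_nonneg fun i _ => sq_nonneg (r i)).mp hr i (Finset.mem_univ i)

theorem eval_sum_sq_map (f : σ → MvPolynomial (Fin 2) ℝ) (x : Fin 2 → ℂ) :
    eval x (∑ i, map (algebraMap ℝ ℂ) (f i) ^ 2) = ∑ i, curveMap f x i ^ 2 := by
  simp [curveMap]

theorem sum_sq_map_ne_zero (hf0 : ∃ i, f i ≠ 0) : ∑ i, map (algebraMap ℝ ℂ) (f i) ^ 2 ≠ 0 := by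
  obtain ⟨i, hi⟩ := hf0
  intro h
  refine hi (MvPolynomial.funext fun t => ?_)
  have ht := congrArg (eval fun j => (t j : ℂ)) h
  rw [eval_sum_sq_map, curveMap_ofReal, map_zero] at ht
  simpa using congrFun (eq_zero_of_sum_sq_ofReal_eq_zero ht) i

-- `curveMap f 0` is real, and `Q_E` has no real points.
theorem ne_zero_of_curveMap_ne_zero {x : Fin 2 → ℂ} (hx : curveMap f x ≠ 0)
    (hq : ∑ i, curveMap f x i ^ 2 = 0) : x ≠ 0 := by
  rintro rfl
  have h0 : (0 : Fin 2 → ℂ) = fun j => ((0 : Fin 2 → ℝ) j : ℂ) := by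
    funext j
    simp
  rw [h0, curveMap_ofReal] at hx hq
  have := eq_zero_of_sum_sq_ofReal_eq_zero (r := fun i => eval 0 (f i)) hq
  exact hx (funext fun i => by simpa using congrFun this i)

open Function Projectivization in
theorem card_le_of_curveMap_isotropic {ι : Type*} [Fintype ι] {d : ℕ}
    (hf : ∀ i, (f i).IsHomogeneous d) (hf0 : ∃ i, f i ≠ 0) {x : ι → Fin 2 → ℂ}
    (hx : ∀ k, curveMap f (x k) ≠ 0) (hq : ∀ k, ∑ i, curveMap f (x k) i ^ 2 = 0)
    (hinj : Injective fun k => mk ℂ (curveMap f (x k)) (hx k)) : Fintype.card ι ≤ 2 * d := by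
  have hx0 k : x k ≠ 0 := ne_zero_of_curveMap_ne_zero (hx k) (hq k)
  have hG : (∑ i, map (algebraMap ℝ ℂ) (f i) ^ 2).IsHomogeneous (2 * d) :=
    IsHomogeneous.sum _ _ _ fun i _ => by simpa [mul_comm] using ((hf i).map _).pow 2
  refine hG.card_le_of_eval_eq_zero (sum_sq_map_ne_zero hf0) hx0
    (fun k k' h => hinj (mk_curveMap_eq_of_mk_eq hf _ _ _ _ h)) fun k => ?_
  rw [eval_sum_sq_map]
  exact hq k

end RealForms

open Function Projectivization in
theorem card_le_of_imageSet_meets {ι : Type*} [Fintype ι] {f : Fin 4 → MvPolynomial (Fin 2) ℝ}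
    {d : ℕ} (hf : ∀ i, (f i).IsHomogeneous d) (hf0 : ∃ i, f i ≠ 0)
    (S : ι → Set (Projectivization ℂ (Fin 4 → ℂ))) (hS : Pairwise (Disjoint on S))
    (hSQ : ∀ k, ∀ x ∈ S k, ∑ i, x.rep i ^ 2 = 0) (hmeet : ∀ k, (S k ∩ imageSet f).Nonempty) :
    Fintype.card ι ≤ 2 * d := by
  have hparam k : ∃ (a b : ℂ) (h : curveMap f ![a, b] ≠ 0), mk ℂ _ h ∈ S k := by
    obtain ⟨_, hy, a, b, h, rfl⟩ := hmeet k
    exact ⟨a, b, h, hy⟩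
  choose a b hab hmem using hparam
  refine card_le_of_curveMap_isotropic hf hf0 hab
    (fun k => (sum_sq_rep_mk_eq_zero_iff _).mp (hSQ k _ (hmem k))) fun k k' h => ?_
  by_contra hne
  exact (hS hne).ne_of_mem (hmem k) (hmem k') h

theorem no_real_cubic_through_four_points_and_four_lines_general
    (p : Fin 4 → Projectivization ℂ (Fin 4 → ℂ))
    (hpdist : Function.Injective p)
    (hpQ : ∀ k, ∑ i, ((p k).rep i) ^ 2 = 0)
    (ℓ : Fin 4 → Submodule ℂ (Fin 4 → ℂ))
    (hdisj : ∀ i j, i ≠ j → ℓ i ⊓ ℓ j = ⊥)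
    (hiso : ∀ j, ∀ v ∈ ℓ j, ∑ k, (v k) ^ 2 = 0)
    (havoid : ∀ k j, (p k).rep ∉ ℓ j) :
    ¬ ∃ f : Fin 4 → MvPolynomial (Fin 2) ℝ,
      (∀ i, (f i).IsHomogeneous 3) ∧ (∃ i, f i ≠ 0) ∧
      (∀ k, p k ∈ imageSet f) ∧
      (∀ j, ∃ a b : ℂ,
        (fun i => eval ![a, b] (map (algebraMap ℝ ℂ) (f i))) ≠ 0 ∧
        (fun i => eval ![a, b] (map (algebraMap ℝ ℂ) (f i))) ∈ ℓ j) := by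
  rintro ⟨f, hf, hf0, hp, hℓ⟩
  let S : Fin 4 ⊕ Fin 4 → Set (Projectivization ℂ (Fin 4 → ℂ)) :=
    Sum.elim (fun k => {p k}) fun j => {x | x.rep ∈ ℓ j}
  have hS : Pairwise (Function.onFun Disjoint S) := by
    rintro (k | j) (k' | j') hne
    · exact Set.disjoint_singleton.mpr (hpdist.ne (hne ∘ congrArg Sum.inl))
    · exact Set.disjoint_singleton_left.mpr (havoid k j')
    · exact Set.disjoint_singleton_right.mpr (havoid k' j)
    · refine Set.disjoint_left.mpr fun x hj hj' => x.rep_nonzero ?_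
      simpa [hdisj j j' (hne ∘ congrArg Sum.inr)] using Submodule.mem_inf.mpr ⟨hj, hj'⟩
  have hSQ : ∀ k, ∀ x ∈ S k, ∑ i, x.rep i ^ 2 = 0 := by
    rintro (k | j) x hx
    · exact (Set.mem_singleton_iff.mp hx) ▸ hpQ k
    · exact hiso j _ hx
  have hmeet : ∀ k, (S k ∩ imageSet f).Nonempty := by
    rintro (k | j)
    · exact ⟨p k, rfl, hp k⟩
    · obtain ⟨a, b, hab, hmem⟩ := hℓ j
      exact ⟨_, (Projectivization.rep_mk_mem_iff hab).mpr hmem, a, b, hab, rfl⟩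
  simpa using card_le_of_imageSet_meets hf hf0 S hS hSQ hmeet

/-- Four distinct points on the empty quadric `Q_E ⊆ ℙ³(ℂ)` and four
pairwise disjoint isotropic lines avoiding these points cannot all be met by a rational cubic
curve parametrized by real forms. -/
theorem no_real_cubic_through_four_points_and_four_lines
    (p : Fin 4 → Projectivization ℂ (Fin 4 → ℂ))
    (hpdist : Function.Injective p)
    (hpQ : ∀ k, ∑ i, ((p k).rep i) ^ 2 = 0)
    (ℓ : Fin 4 → Submodule ℂ (Fin 4 → ℂ))
    (hdim : ∀ j, Module.finrank ℂ (ℓ j) = 2)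
    (hdisj : ∀ i j, i ≠ j → ℓ i ⊓ ℓ j = ⊥)
    (hiso : ∀ j, ∀ v ∈ ℓ j, ∑ k, (v k) ^ 2 = 0)
    (havoid : ∀ k j, (p k).rep ∉ ℓ j) :
    ¬ ∃ f : Fin 4 → MvPolynomial (Fin 2) ℝ,
      (∀ i, (f i).IsHomogeneous 3) ∧ (∃ i, f i ≠ 0) ∧
      (∀ k, p k ∈ imageSet f) ∧
      (∀ j, ∃ a b : ℂ,
        (fun i => eval ![a, b] (map (algebraMap ℝ ℂ) (f i))) ≠ 0 ∧
        (fun i => eval ![a, b] (map (algebraMap ℝ ℂ) (f i))) ∈ ℓ j) :=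
  no_real_cubic_through_four_points_and_four_lines_general p hpdist hpQ ℓ hdisj hiso havoid
end

section
/- Let q(z) = z₀² + z₁² + z₂² + z₃² on ℂ⁴. Let ℓ₁, …, ℓ₈ ⊆ ℂ⁴ be 2-dimensional complex subspaces with ℓᵢ ∩ ℓⱼ = {0} for all i ≠ j, on each of which q vanishes identically. Then there do not exist homogeneous polynomials f₀,…,f₃ ∈ ℝ[s,t] of degree 3, not all zero, such that the image of the associated map meets every one of the projectivized lines ℙ(ℓ₁), …, ℙ(ℓ₈) in ℙ³(ℂ). -/
/-!
On the curve, `q` becomes the binary sextic `g = f₀² + f₁² + f₂² + f₃²`, which vanishes at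
the eight parameter points. Since the `fᵢ` are homogeneous, proportional parameters give
proportional points of `ℂ⁴`, so disjointness of the lines makes the parameters pairwise
non-proportional. A nonzero binary form of degree `6` has at most one zero at infinity and at
most `6` affine ones, so `g = 0`; for real `fᵢ` this forces every `fᵢ = 0`.
-/

open MvPolynomial

theorem exists_eq_smul_of_det_eq_zero {K : Type*} [Field K] {x y : Fin 2 → K} (hy : y ≠ 0)
    (h : x 0 * y 1 = y 0 * x 1) : ∃ c : K, x = c • y := by
  by_cases hy1 : y 1 = 0
  · have hy0 : y 0 ≠ 0 := fun hy0 => hy (by ext i; fin_cases i <;> simp [hy0, hy1])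
    have hx1 : x 1 = 0 := by simpa [hy1, hy0] using h
    refine ⟨x 0 / y 0, ?_⟩
    ext i; fin_cases i <;> simp [hy0, hy1, hx1]
  · refine ⟨x 1 / y 1, ?_⟩
    ext i
    fin_cases i <;> simp only [Fin.zero_eta, Fin.mk_one, Pi.smul_apply, smul_eq_mul] <;> field_simp
    linear_combination h

namespace MvPolynomial

theorem IsHomogeneous.eval_smul_s11 {σ R : Type*} [CommSemiring R] {φ : MvPolynomial σ R} {n : ℕ}
    (hφ : φ.IsHomogeneous n) (c : R) (x : σ → R) :
    eval (c • x) φ = c ^ n * eval x φ := by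
  rw [eval_eq, eval_eq, Finset.mul_sum]
  refine Finset.sum_congr rfl fun d hd => ?_
  have hd : ∑ i ∈ d.support, d i = n := by
    rw [← Finsupp.degree_apply, Finsupp.degree_eq_weight_one]; exact hφ (mem_support_iff.mp hd)
  simp_rw [Pi.smul_apply, smul_eq_mul, mul_pow, Finset.prod_mul_distrib,
    Finset.prod_pow_eq_pow_sum, hd]
  ring

theorem IsHomogeneous.natDegree_aeval_X_one_le_s11 {R : Type*} [CommSemiring R]
    {g : MvPolynomial (Fin 2) R} {n : ℕ} (hg : g.IsHomogeneous n) :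
    (MvPolynomial.aeval ![Polynomial.X, (1 : Polynomial R)] g).natDegree ≤ n := by
  rw [g.as_sum, map_sum]
  refine Polynomial.natDegree_sum_le_of_forall_le _ _ fun d hd => ?_
  rw [aeval_monomial, Finsupp.prod_fintype _ _ (by simp), Fin.prod_univ_two]
  simp only [Matrix.cons_val_zero, Matrix.cons_val_one, one_pow, mul_one]
  refine Polynomial.natDegree_C_mul_X_pow_le _ _ |>.trans ?_
  have hd : d 0 + d 1 = n := by
    simpa [Finsupp.weight_apply, Finsupp.sum_fintype] using hg (mem_support_iff.mp hd)
  omega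

theorem eval_aeval_X_one {R : Type*} [CommSemiring R] (g : MvPolynomial (Fin 2) R) (t : R) :
    (MvPolynomial.aeval ![Polynomial.X, (1 : Polynomial R)] g).eval t = eval ![t, 1] g := by
  rw [aeval_def, polynomial_eval_eval₂]
  congr 1
  · ext; simp
  · ext i; fin_cases i <;> simp

theorem IsHomogeneous.eq_zero_of_eval_affine_eq_zero {R : Type*} [CommRing R] [IsDomain R]
    {g : MvPolynomial (Fin 2) R} {n : ℕ} (hg : g.IsHomogeneous n) (s : Finset R)
    (hs : ∀ t ∈ s, eval ![t, 1] g = 0) (hcard : n < s.card) : g = 0 := by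
  have hp : MvPolynomial.aeval ![Polynomial.X, (1 : Polynomial R)] g = 0 :=
    Polynomial.eq_zero_of_natDegree_lt_card_of_eval_eq_zero' _ s
      (fun t ht => (eval_aeval_X_one g t).trans (hs t ht))
      (hg.natDegree_aeval_X_one_le_s11.trans_lt hcard)
  rw [← Polynomial.homogenize_eq_of_isHomogeneous hg hp, Polynomial.homogenize_zero]

theorem eq_zero_of_sum_sq_eq_zero {σ ι R : Type*}
    [CommRing R] [LinearOrder R] [IsStrictOrderedRing R]
    {s : Finset ι} {f : ι → MvPolynomial σ R} (h : ∑ i ∈ s, f i ^ 2 = 0) :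
    ∀ i ∈ s, f i = 0 := by
  intro i hi
  refine MvPolynomial.funext fun x => ?_
  have hx : ∑ j ∈ s, eval x (f j) ^ 2 = 0 := by simpa using congrArg (eval x) h
  simpa using (Finset.sum_eq_zero_iff_of_nonneg fun j _ => sq_nonneg _).mp hx i hi

theorem IsHomogeneous.eq_zero_of_eval_eq_zero_of_pairwise_det_ne_zero {K : Type*} [Field K]
    {g : MvPolynomial (Fin 2) K} {n : ℕ} (hg : g.IsHomogeneous n) {ι : Type*} [Fintype ι]
    (x : ι → Fin 2 → K) (hx : Pairwise fun i j => x i 0 * x j 1 ≠ x j 0 * x i 1)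
    (hzero : ∀ i, eval (x i) g = 0) (hcard : n + 1 < Fintype.card ι) : g = 0 := by
  classical
  set A := Finset.univ.filter fun i => x i 1 ≠ 0
  have hslope : Set.InjOn (fun i => x i 0 / x i 1) A := by
    intro i hi j hj hij
    by_contra hne
    simp only [A, Finset.coe_filter, Finset.mem_univ, true_and, Set.mem_ofPred_eq] at hi hj
    refine hx hne ?_
    field_simp at hij
    linear_combination hij
  have hA : Fintype.card ι ≤ A.card + 1 := by
    have hinf : (Finset.univ.filter fun i => ¬ x i 1 ≠ 0).card ≤ 1 :=
      Finset.card_le_one.mpr fun i hi j hj => by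
        by_contra hne
        simp only [Finset.mem_filter, Finset.mem_univ, true_and, not_not] at hi hj
        exact hx hne (by rw [hi, hj, mul_zero, mul_zero])
    have hsplit : A.card + (Finset.univ.filter fun i => ¬ x i 1 ≠ 0).card = Fintype.card ι :=
      Finset.card_filter_add_card_filter_not _
    omega
  refine hg.eq_zero_of_eval_affine_eq_zero (A.image fun i => x i 0 / x i 1) ?_ ?_
  · simp only [Finset.mem_image]
    rintro _ ⟨i, hi, rfl⟩
    have hi : x i 1 ≠ 0 := (Finset.mem_filter.mp hi).2
    have hxi : x i = x i 1 • ![x i 0 / x i 1, 1] := by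
      ext j; fin_cases j <;> simp [mul_div_cancel₀ _ hi]
    have := hzero i
    rw [hxi, hg.eval_smul_s11] at this
    exact (mul_eq_zero.mp this).resolve_left (pow_ne_zero _ hi)
  · rw [Finset.card_image_of_injOn hslope]
    omega

theorem pairwise_det_ne_zero_of_eval_mem_disjoint {K ι κ : Type*} [Field K] {n : ℕ}
    {F : κ → MvPolynomial (Fin 2) K} (hF : ∀ k, (F k).IsHomogeneous n)
    {ℓ : ι → Submodule K (κ → K)} (hℓ : Pairwise fun i j => ℓ i ⊓ ℓ j = ⊥) (u : ι → Fin 2 → K)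
    (hne : ∀ i, (fun k => eval (u i) (F k)) ≠ 0)
    (hmem : ∀ i, (fun k => eval (u i) (F k)) ∈ ℓ i) :
    Pairwise fun i j => u i 0 * u j 1 ≠ u j 0 * u i 1 := by
  have not_proportional {i j : ι} (hij : i ≠ j) (c : K) (hc : u i = c • u j) : False := by
    refine hne i ((Submodule.mem_bot K).mp ?_)
    rw [← hℓ hij]
    have hscale : (fun k => eval (u i) (F k)) = c ^ n • fun k => eval (u j) (F k) := by
      ext k; rw [hc, (hF k).eval_smul_s11]; rfl
    exact ⟨hmem i, hscale ▸ Submodule.smul_mem _ _ (hmem j)⟩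
  intro i j hij hdet
  by_cases hu : u j = 0
  · exact not_proportional hij.symm 0 (by rw [hu, zero_smul])
  · obtain ⟨c, hc⟩ := exists_eq_smul_of_det_eq_zero hu hdet
    exact not_proportional hij c hc

end MvPolynomial

theorem no_real_cubic_meets_eight_lines_general
    (ℓ : Fin 8 → Submodule ℂ (Fin 4 → ℂ))
    (hdisj : ∀ i j, i ≠ j → ℓ i ⊓ ℓ j = ⊥)
    (hiso : ∀ j, ∀ v ∈ ℓ j, ∑ k, (v k) ^ 2 = 0) :
    ¬ ∃ f : Fin 4 → MvPolynomial (Fin 2) ℝ,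
      (∀ i, (f i).IsHomogeneous 3) ∧ (∃ i, f i ≠ 0) ∧
      ∀ j : Fin 8, ∃ a b : ℂ,
        (fun i => eval ![a, b] (map (algebraMap ℝ ℂ) (f i))) ≠ 0 ∧
        (fun i => eval ![a, b] (map (algebraMap ℝ ℂ) (f i))) ∈ ℓ j := by
  rintro ⟨f, hhom, ⟨i₀, hi₀⟩, hmeet⟩
  choose a b hne hmem using hmeet
  have hdet := pairwise_det_ne_zero_of_eval_mem_disjoint
    (fun i => (hhom i).map (algebraMap ℝ ℂ)) (fun i j => hdisj i j) (fun j => ![a j, b j]) hne hmem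
  have hsextic : (∑ i, f i ^ 2).IsHomogeneous 6 :=
    IsHomogeneous.sum _ _ _ fun i _ => (hhom i).pow 2
  have hsum : map (algebraMap ℝ ℂ) (∑ i, f i ^ 2) = map (algebraMap ℝ ℂ) 0 := by
    rw [map_zero]
    exact (hsextic.map _).eq_zero_of_eval_eq_zero_of_pairwise_det_ne_zero _ hdet
      (fun j => by simpa using hiso j _ (hmem j)) (by simp)
  exact hi₀ <| eq_zero_of_sum_sq_eq_zero
    (map_injective _ (algebraMap ℝ ℂ).injective hsum) i₀ (Finset.mem_univ _)

/-- Eight pairwise disjoint isotropic lines on the empty quadric in `ℙ³(ℂ)`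
cannot all be met by a rational cubic curve parametrized by real forms. -/
theorem no_real_cubic_meets_eight_lines
    (ℓ : Fin 8 → Submodule ℂ (Fin 4 → ℂ))
    (hdim : ∀ j, Module.finrank ℂ (ℓ j) = 2)
    (hdisj : ∀ i j, i ≠ j → ℓ i ⊓ ℓ j = ⊥)
    (hiso : ∀ j, ∀ v ∈ ℓ j, ∑ k, (v k) ^ 2 = 0) :
    ¬ ∃ f : Fin 4 → MvPolynomial (Fin 2) ℝ,
      (∀ i, (f i).IsHomogeneous 3) ∧ (∃ i, f i ≠ 0) ∧
      ∀ j : Fin 8, ∃ a b : ℂ,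
        (fun i => eval ![a, b] (map (algebraMap ℝ ℂ) (f i))) ≠ 0 ∧
        (fun i => eval ![a, b] (map (algebraMap ℝ ℂ) (f i))) ∈ ℓ j :=
  no_real_cubic_meets_eight_lines_general ℓ hdisj hiso
end
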